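/- Let u ∈ Lip_c(ℝⁿ), u ≥ 0, Ω ⊂ ℝⁿ open with supp u ⊂ Ω, and for t ≥ 0 let N_t = { x : u(x) ≥ t }. Then ∫_0^∞ cap_Ω(N_t) d(t²) ≤ 4 ∫_Ω |∇u|² dx. -/

import Mathlib

/-!
For `t > 0` the function `v_t = (min(u, t) / t)²` is admissible for `cap_Ω(N_t)`, and
`|∇v_t|² = 4 u² |∇u|² / t⁴` on `{u < t}` while `∇v_t = 0` elsewhere. Hence
`2 t cap_Ω(N_t) ≤ ∫_{u < t} (2 u² / t³) · 4 |∇u|²`. Integrating in `t` and exchanging the integrals,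
the inner integral `∫_{u(x)}^∞ 2 u(x)² / t³ dt` equals `1` wherever `u(x) > 0`, which leaves
`4 ∫_{u > 0} |∇u|²`.
-/

open MeasureTheory

noncomputable section

/-- The closed cube with center `c` and edge length `d`, edges parallel to the axes. -/
def cube (n : ℕ) (c : Fin n → ℝ) (d : ℝ) : Set (Fin n → ℝ) :=
  {x | ∀ i, |x i - c i| ≤ d / 2}

/-- Wiener capacity of `F` relative to `Ω`. -/
def capRel (n : ℕ) (Ω F : Set (Fin n → ℝ)) : ℝ :=
  sInf {e : ℝ | ∃ v : (Fin n → ℝ) → ℝ, (∃ K : NNReal, LipschitzWith K v) ∧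
    HasCompactSupport v ∧ tsupport v ⊆ Ω ∧ (∀ x ∈ F, v x = 1) ∧
    e = ∫ x, ‖fderiv ℝ v x‖ ^ 2}

/-- Wiener capacity of a subset of `Q_d`: relative to `ℝⁿ` for `n ≥ 3`, and for `n = 2`
relative to the open concentric square of side `2d`. -/
def wcap (n : ℕ) (c : Fin n → ℝ) (d : ℝ) (F : Set (Fin n → ℝ)) : ℝ :=
  if n = 2 then capRel n (interior (cube n c (2 * d))) F else capRel n Set.univ F

/-- The Molchanov functional `M_γ(Q_d; V)`. -/
def molch (n : ℕ) (c : Fin n → ℝ) (d γ : ℝ) (V : (Fin n → ℝ) → ℝ) : ℝ :=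
  sInf {m : ℝ | ∃ F : Set (Fin n → ℝ), IsCompact F ∧ F ⊆ cube n c d ∧
    wcap n c d F ≤ γ * wcap n c d (cube n c d) ∧ m = ∫ x in cube n c d \ F, V x}

/-- Squared pointwise norm of the magnetic gradient `∇_a u = ∇u + i a u`. -/
def magGradSq (n : ℕ) (a : (Fin n → ℝ) → Fin n → ℝ) (u : (Fin n → ℝ) → ℂ)
    (x : Fin n → ℝ) : ℝ :=
  ∑ j, ‖fderiv ℝ u x (Pi.single j 1) + Complex.I * (a x j : ℂ) * u x‖ ^ 2

open Set Filter Topology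
open scoped ENNReal NNReal

section Calculus

variable {E : Type*} [NormedAddCommGroup E] [NormedSpace ℝ E]

theorem fderiv_sq_of_nonneg {f : E → ℝ} (hf : ∀ y, 0 ≤ f y) (x : E) :
    fderiv ℝ (fun y => f y ^ 2) x = (2 * f x) • fderiv ℝ f x := by
  by_cases hd : DifferentiableAt ℝ f x
  · simp [fderiv_fun_pow 2 hd]
  rcases (hf x).eq_or_lt with hx | hx
  · have hmin : IsLocalMin (fun y => f y ^ 2) x :=
      Eventually.of_forall fun y => by simp [← hx, sq_nonneg]
    simp [hmin.fderiv_eq_zero, ← hx]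
  · -- `f = √(f ^ 2)` is differentiable wherever `f ^ 2` is and `f` does not vanish
    have hnd : ¬DifferentiableAt ℝ (fun y => f y ^ 2) x := fun h =>
      hd <| by simpa [Real.sqrt_sq (hf _)] using h.sqrt (by positivity)
    simp [fderiv_zero_of_not_differentiableAt hd, fderiv_zero_of_not_differentiableAt hnd]

theorem fderiv_min_const {f : E → ℝ} {x : E} (hf : ContinuousAt f x) (c : ℝ) :
    fderiv ℝ (fun y => min (f y) c) x = {y | f y < c}.indicator (fderiv ℝ f) x := by
  rcases lt_trichotomy (f x) c with hx | hx | hx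
  · have hev : (fun y => min (f y) c) =ᶠ[𝓝 x] f :=
      (hf.eventually (gt_mem_nhds hx)).mono fun y hy => min_eq_left hy.le
    rw [hev.fderiv_eq, indicator_of_mem (show x ∈ {y | f y < c} from hx)]
  · have hmax : IsLocalMax (fun y => min (f y) c) x :=
      Eventually.of_forall fun y => by simp [hx]
    rw [hmax.fderiv_eq_zero, indicator_of_notMem (by simp [hx])]
  · have hev : (fun y => min (f y) c) =ᶠ[𝓝 x] fun _ => c :=
      (hf.eventually (lt_mem_nhds hx)).mono fun y hy => min_eq_right hy.le
    rw [hev.fderiv_eq, fderiv_const_apply, indicator_of_notMem (by simp [hx.le])]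

end Calculus

theorem LipschitzWith.sq_of_abs_le {α : Type*} [PseudoMetricSpace α] {g : α → ℝ} {K M : ℝ≥0}
    (hg : LipschitzWith K g) (hM : ∀ x, |g x| ≤ M) :
    LipschitzWith (2 * M * K) fun x => g x ^ 2 := by
  refine LipschitzWith.of_dist_le_mul fun x y => ?_
  have hsum : |g x + g y| ≤ 2 * M := (abs_add_le _ _).trans (by linarith [hM x, hM y])
  calc dist (g x ^ 2) (g y ^ 2) = |g x + g y| * dist (g x) (g y) := by
        rw [Real.dist_eq, Real.dist_eq, ← abs_mul]; ring_nf
    _ ≤ 2 * M * (K * dist x y) := by gcongr; exact hg.dist_le_mul x y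
    _ = _ := by push_cast; ring

def truncSq {α : Type*} (u : α → ℝ) (t : ℝ) : α → ℝ := fun y => (t⁻¹ * min (u y) t) ^ 2

section Truncation

variable {α : Type*} {u : α → ℝ} {t : ℝ}

theorem truncSq_of_le (ht : t ≠ 0) {x : α} (hx : t ≤ u x) : truncSq u t x = 1 := by
  simp [truncSq, min_eq_right hx, ht]

theorem support_truncSq_subset (ht : 0 ≤ t) :
    Function.support (truncSq u t) ⊆ Function.support u :=
  Function.support_subset_iff'.mpr fun x hx => by
    simp [truncSq, Function.notMem_support.mp hx, ht]

theorem LipschitzWith.truncSq [PseudoMetricSpace α] {K : ℝ≥0} (hu : LipschitzWith K u)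
    (hu0 : ∀ x, 0 ≤ u x) (ht : 0 < t) : LipschitzWith (2 * ‖t⁻¹‖₊ * K) (truncSq u t) := by
  have h : LipschitzWith (2 * 1 * (‖t⁻¹‖₊ * K)) (_root_.truncSq u t) :=
    ((lipschitzWith_smul t⁻¹).comp (hu.min_const t)).sq_of_abs_le fun x => ?_
  · simpa only [mul_one, mul_assoc] using h
  have h0 : 0 ≤ min (u x) t := le_min (hu0 x) ht.le
  simp only [Function.comp_apply, smul_eq_mul, NNReal.coe_one]
  rw [abs_of_nonneg (by positivity), inv_mul_le_one₀ ht]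
  exact min_le_right _ _

end Truncation

theorem norm_fderiv_truncSq_sq {E : Type*} [NormedAddCommGroup E] [NormedSpace ℝ E] {u : E → ℝ}
    {t : ℝ} (hu : Continuous u) (hu0 : ∀ x, 0 ≤ u x) (ht : 0 < t) (x : E) :
    ‖fderiv ℝ (truncSq u t) x‖ ^ 2 =
      {y | u y < t}.indicator (fun y => (2 * u y / t ^ 2) ^ 2 * ‖fderiv ℝ u y‖ ^ 2) x := by
  have hsmul :
      fderiv ℝ (fun y => t⁻¹ * min (u y) t) x = t⁻¹ • fderiv ℝ (fun y => min (u y) t) x :=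
    congrFun (fderiv_const_smul_field (f := fun y => min (u y) t) t⁻¹) x
  unfold truncSq
  rw [fderiv_sq_of_nonneg (fun y => by have := hu0 y; positivity), hsmul,
    fderiv_min_const hu.continuousAt]
  by_cases hx : x ∈ {y | u y < t}
  · rw [indicator_of_mem hx, indicator_of_mem hx, min_eq_left (le_of_lt hx), norm_smul, norm_smul,
      Real.norm_of_nonneg (by have := hu0 x; positivity), Real.norm_of_nonneg (by positivity)]
    field_simp
  · simp [indicator_of_notMem hx]

theorem LipschitzWith.integrable_norm_fderiv_sq {E : Type*} [NormedAddCommGroup E]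
    [NormedSpace ℝ E] [MeasurableSpace E] [OpensMeasurableSpace E] {μ : Measure E}
    [IsFiniteMeasureOnCompacts μ] {f : E → ℝ} {K : ℝ≥0} (hf : LipschitzWith K f)
    (hcs : HasCompactSupport f) : Integrable (fun x => ‖fderiv ℝ f x‖ ^ 2) μ := by
  have hsupp : Function.support (fun x => ‖fderiv ℝ f x‖ ^ 2) ⊆ tsupport f :=
    (Function.support_comp_subset (g := fun L : E →L[ℝ] ℝ => ‖L‖ ^ 2) (by simp) _).trans
      (support_fderiv_subset ℝ)
  refine (integrableOn_iff_integrable_of_support_subset hsupp).mp ?_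
  refine Measure.integrableOn_of_bounded (M := K ^ 2) hcs.measure_lt_top.ne
    ((measurable_fderiv ℝ f).norm.pow_const 2).aestronglyMeasurable (ae_of_all _ fun x => ?_)
  rw [norm_pow, norm_norm]
  gcongr
  exact norm_fderiv_le_of_lipschitz ℝ hf

theorem ofReal_integral_le_lintegral_ofReal {α : Type*} [MeasurableSpace α] {μ : Measure α}
    {f : α → ℝ} (hf : 0 ≤ᵐ[μ] f) :
    ENNReal.ofReal (∫ x, f x ∂μ) ≤ ∫⁻ x, ENNReal.ofReal (f x) ∂μ := by
  have hnorm : ∫⁻ x, ENNReal.ofReal ‖f x‖ ∂μ = ∫⁻ x, ENNReal.ofReal (f x) ∂μ :=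
    lintegral_congr_ae (hf.mono fun x hx => congrArg ENNReal.ofReal (Real.norm_of_nonneg hx))
  exact ENNReal.ofReal_le_of_le_toReal <|
    (le_abs_self _).trans ((norm_integral_le_lintegral_norm f).trans_eq (by rw [hnorm]))

theorem lintegral_Ioi_two_mul_sq_div_pow_three {a : ℝ} (ha : 0 < a) :
    ∫⁻ t in Ioi a, ENNReal.ofReal (2 * a ^ 2 / t ^ 3) = 1 := by
  -- `t ↦ -a² / t²` is a primitive tending to `0` at infinity
  have hderiv : ∀ t ∈ Ici a, HasDerivAt (fun t => -a ^ 2 / t ^ 2) (2 * a ^ 2 / t ^ 3) t := by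
    intro t ht
    have ht0 : t ≠ 0 := (ha.trans_le ht).ne'
    refine ((hasDerivAt_const t (-a ^ 2)).fun_div (hasDerivAt_id' t |>.fun_pow 2)
      (pow_ne_zero 2 ht0)).congr_deriv ?_
    field_simp
    ring
  have hpos : ∀ t ∈ Ioi a, 0 ≤ 2 * a ^ 2 / t ^ 3 := fun t ht => by
    have : 0 < t := ha.trans ht
    positivity
  have hlim : Tendsto (fun t : ℝ => -a ^ 2 / t ^ 2) atTop (𝓝 0) :=
    tendsto_const_nhds.div_atTop (tendsto_pow_atTop two_ne_zero)
  rw [← ofReal_integral_eq_lintegral_ofReal (integrableOn_Ioi_deriv_of_nonneg' hderiv hpos hlim)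
    ((ae_restrict_iff' measurableSet_Ioi).mpr (ae_of_all _ hpos)),
    integral_Ioi_of_hasDerivAt_of_nonneg' hderiv hpos hlim]
  field_simp
  simp

theorem lintegral_Ioi_lintegral_sublevel {α : Type*} [MeasurableSpace α] {μ : Measure α}
    [SFinite μ] {f : α → ℝ} (hf : Measurable f) (hf0 : ∀ x, 0 ≤ f x) {g : α → ℝ≥0∞}
    (hg : Measurable g) :
    ∫⁻ t in Ioi 0, ∫⁻ x in {x | f x < t}, ENNReal.ofReal (2 * f x ^ 2 / t ^ 3) * g x ∂μ =
      ∫⁻ x in Function.support f, g x ∂μ := by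
  set k : ℝ → α → ℝ≥0∞ := fun t x => ENNReal.ofReal (2 * f x ^ 2 / t ^ 3) * g x
  have hk : Measurable (Function.uncurry fun t x => {x | f x < t}.indicator (k t) x) := by
    refine Measurable.indicator (s := {p : ℝ × α | f p.2 < p.1}) ?_
      (measurableSet_lt (hf.comp measurable_snd) measurable_fst)
    exact ((measurable_const.mul ((hf.comp measurable_snd).pow_const 2)).div
      (measurable_fst.pow_const 3)).ennreal_ofReal.mul (hg.comp measurable_snd)
  have hinner : ∀ x, ∫⁻ t in Ioi 0, {x | f x < t}.indicator (k t) x =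
      (Function.support f).indicator g x := by
    intro x
    have hIoi : ∀ t, {x | f x < t}.indicator (k t) x = (Ioi (f x)).indicator (k · x) t :=
      fun t => rfl
    simp_rw [hIoi]
    rw [lintegral_indicator measurableSet_Ioi, Measure.restrict_restrict measurableSet_Ioi,
      Ioi_inter_Ioi, sup_eq_left.mpr (hf0 x)]
    rcases (hf0 x).eq_or_lt with hx | hx
    · simp [k, ← hx]
    · rw [lintegral_mul_const _ (by fun_prop), lintegral_Ioi_two_mul_sq_div_pow_three hx, one_mul,
        indicator_of_mem hx.ne']
  simp_rw [← lintegral_indicator (measurableSet_lt hf measurable_const)]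
  rw [lintegral_lintegral_swap hk.aemeasurable, lintegral_congr hinner,
    lintegral_indicator (measurableSet_support hf)]

theorem capRel_nonneg (n : ℕ) (Ω F : Set (Fin n → ℝ)) : 0 ≤ capRel n Ω F :=
  Real.sInf_nonneg <| by
    rintro e ⟨v, -, -, -, -, rfl⟩
    exact integral_nonneg fun x => by positivity

theorem capRel_le_integral {n : ℕ} {Ω F : Set (Fin n → ℝ)} {v : (Fin n → ℝ) → ℝ}
    (hv : ∃ K : ℝ≥0, LipschitzWith K v) (hcs : HasCompactSupport v) (hsupp : tsupport v ⊆ Ω)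
    (hF : ∀ x ∈ F, v x = 1) : capRel n Ω F ≤ ∫ x, ‖fderiv ℝ v x‖ ^ 2 := by
  refine csInf_le ⟨0, ?_⟩ ⟨v, hv, hcs, hsupp, hF, rfl⟩
  rintro e ⟨w, -, -, -, -, rfl⟩
  exact integral_nonneg fun x => by positivity

theorem capRel_superlevel_le {n : ℕ} {Ω : Set (Fin n → ℝ)} {u : (Fin n → ℝ) → ℝ} {K : ℝ≥0}
    (hu : LipschitzWith K u) (hcs : HasCompactSupport u) (hsupp : tsupport u ⊆ Ω)
    (hpos : ∀ x, 0 ≤ u x) {t : ℝ} (ht : 0 < t) :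
    capRel n Ω {x | t ≤ u x} ≤
      ∫ x in {x | u x < t}, (2 * u x / t ^ 2) ^ 2 * ‖fderiv ℝ u x‖ ^ 2 := by
  have hsupp_t := support_truncSq_subset (u := u) ht.le
  calc capRel n Ω {x | t ≤ u x} ≤ ∫ x, ‖fderiv ℝ (truncSq u t) x‖ ^ 2 :=
        capRel_le_integral ⟨_, hu.truncSq hpos ht⟩ (hcs.mono hsupp_t)
          ((closure_mono hsupp_t).trans hsupp) fun x hx => truncSq_of_le ht.ne' hx
    _ = ∫ x in {x | u x < t}, (2 * u x / t ^ 2) ^ 2 * ‖fderiv ℝ u x‖ ^ 2 := by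
        simp_rw [norm_fderiv_truncSq_sq hu.continuous hpos ht]
        exact integral_indicator (measurableSet_lt hu.continuous.measurable measurable_const)

theorem ofReal_mul_capRel_superlevel_le {n : ℕ} {Ω : Set (Fin n → ℝ)} {u : (Fin n → ℝ) → ℝ}
    {K : ℝ≥0} (hu : LipschitzWith K u) (hcs : HasCompactSupport u) (hsupp : tsupport u ⊆ Ω)
    (hpos : ∀ x, 0 ≤ u x) {t : ℝ} (ht : 0 < t) :
    ENNReal.ofReal (2 * t * capRel n Ω {x | t ≤ u x}) ≤
      ∫⁻ x in {x | u x < t}, ENNReal.ofReal (2 * u x ^ 2 / t ^ 3) *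
        ENNReal.ofReal (4 * ‖fderiv ℝ u x‖ ^ 2) :=
  calc ENNReal.ofReal (2 * t * capRel n Ω {x | t ≤ u x})
      ≤ ENNReal.ofReal
          (∫ x in {x | u x < t}, 2 * t * ((2 * u x / t ^ 2) ^ 2 * ‖fderiv ℝ u x‖ ^ 2)) := by
        rw [integral_const_mul]
        gcongr
        exact capRel_superlevel_le hu hcs hsupp hpos ht
    _ ≤ _ := ofReal_integral_le_lintegral_ofReal (ae_of_all _ fun x => by positivity)
    _ = _ := lintegral_congr fun x => by
        rw [← ENNReal.ofReal_mul (by positivity)]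
        congr 1
        field_simp
        ring

theorem capacitary_strong_type_general (n : ℕ) (Ω : Set (Fin n → ℝ))
    (u : (Fin n → ℝ) → ℝ) (K : NNReal) (hu : LipschitzWith K u)
    (hcs : HasCompactSupport u) (hsupp : tsupport u ⊆ Ω) (hpos : ∀ x, 0 ≤ u x) :
    ∫ t in Set.Ioi (0 : ℝ), 2 * t * capRel n Ω {x | t ≤ u x} ≤
      4 * ∫ x in Ω, ‖fderiv ℝ u x‖ ^ 2 := by
  rw [← ENNReal.ofReal_le_ofReal_iff (by positivity)]
  calc ENNReal.ofReal (∫ t in Ioi 0, 2 * t * capRel n Ω {x | t ≤ u x})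
      ≤ ∫⁻ t in Ioi 0, ENNReal.ofReal (2 * t * capRel n Ω {x | t ≤ u x}) :=
        ofReal_integral_le_lintegral_ofReal <| (ae_restrict_iff' measurableSet_Ioi).mpr <|
          ae_of_all _ fun t (ht : 0 < t) => by
            have := capRel_nonneg n Ω {x | t ≤ u x}
            positivity
    _ ≤ ∫⁻ t in Ioi 0, ∫⁻ x in {x | u x < t}, ENNReal.ofReal (2 * u x ^ 2 / t ^ 3) *
          ENNReal.ofReal (4 * ‖fderiv ℝ u x‖ ^ 2) :=
        setLIntegral_mono' measurableSet_Ioi fun t ht =>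
          ofReal_mul_capRel_superlevel_le hu hcs hsupp hpos ht
    _ = ∫⁻ x in Function.support u, ENNReal.ofReal (4 * ‖fderiv ℝ u x‖ ^ 2) :=
        lintegral_Ioi_lintegral_sublevel hu.continuous.measurable hpos (by fun_prop)
    _ ≤ ∫⁻ x in Ω, ENNReal.ofReal (4 * ‖fderiv ℝ u x‖ ^ 2) :=
        lintegral_mono_set ((subset_tsupport u).trans hsupp)
    _ = ENNReal.ofReal (4 * ∫ x in Ω, ‖fderiv ℝ u x‖ ^ 2) := by
        rw [← integral_const_mul, ofReal_integral_eq_lintegral_ofReal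
          ((hu.integrable_norm_fderiv_sq hcs).const_mul 4).integrableOn
          (ae_of_all _ fun x => by positivity)]

/-- capacitary strong-type inequality (Maz'ya, Theorem 2.3.1). -/
theorem capacitary_strong_type (n : ℕ) (Ω : Set (Fin n → ℝ)) (hΩ : IsOpen Ω)
    (u : (Fin n → ℝ) → ℝ) (K : NNReal) (hu : LipschitzWith K u)
    (hcs : HasCompactSupport u) (hsupp : tsupport u ⊆ Ω) (hpos : ∀ x, 0 ≤ u x) :
    ∫ t in Set.Ioi (0 : ℝ), 2 * t * capRel n Ω {x | t ≤ u x} ≤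
      4 * ∫ x in Ω, ‖fderiv ℝ u x‖ ^ 2 :=
  capacitary_strong_type_general n Ω u K hu hcs hsupp hpos
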